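/- Let p ∈ (0,1) and let μ₁, μ₂ be Borel probability measures on ℝ such that the identity function is integrable with respect to both. Set t = VaR_p(μ₁), and assume the CDFs satisfy F_{μ₁}(r) ≥ F_{μ₂}(r) for all r ∈ (-∞, t]. Then CVaR_p(μ₁) ≤ CVaR_p(μ₂). -/

import Mathlib

/-!
Writing `F` for the CDF, the layer-cake formula `E[(t - X)⁺] = ∫_{-∞}^t F` turns the definition
into `p · CVaR_p(μ) = G_μ(VaR_p(μ))` with `G_μ(t) = p t - ∫_{-∞}^t F_μ`. Since `G_μ' = p - F_μ`
changes sign at `VaR_p(μ)`, this is the maximum of `G_μ`. With `t = VaR_p(μ₁)` the hypothesis gives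
`G_{μ₁}(t) ≤ G_{μ₂}(t)`, and the latter is at most `max G_{μ₂} = p · CVaR_p(μ₂)`.
-/

open MeasureTheory Set ProbabilityTheory

/-- The cumulative distribution function of a Borel measure on ℝ:
`F_μ(r) = μ((-∞, r])`. -/
noncomputable def mcdf (μ : Measure ℝ) (r : ℝ) : ℝ := (μ (Iic r)).toReal

/-- The value-at-risk `VaR_p(μ) = sSup {r | F_μ(r) ≤ p}`. -/
noncomputable def valueAtRisk (p : ℝ) (μ : Measure ℝ) : ℝ :=
  sSup {r : ℝ | mcdf μ r ≤ p}

/-- The conditional value-at-risk: with `v = VaR_p(μ)`,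
`CVaR_p(μ) = (1/p)·(∫_{(-∞,v)} x dμ + (p − μ((-∞,v)))·v)`. -/
noncomputable def cvar (p : ℝ) (μ : Measure ℝ) : ℝ :=
  (1 / p) * ((∫ x in Iio (valueAtRisk p μ), x ∂μ) +
    (p - (μ (Iio (valueAtRisk p μ))).toReal) * valueAtRisk p μ)

section mcdf

variable (μ : Measure ℝ)

lemma mcdf_eq_cdf [IsProbabilityMeasure μ] : mcdf μ = cdf μ :=
  funext fun r => (cdf_eq_real μ r).symm

lemma mcdf_nonneg (r : ℝ) : 0 ≤ mcdf μ r := ENNReal.toReal_nonneg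

variable [IsFiniteMeasure μ]

lemma ofReal_mcdf (r : ℝ) : ENNReal.ofReal (mcdf μ r) = μ (Iic r) :=
  ENNReal.ofReal_toReal (measure_ne_top μ _)

lemma monotone_mcdf : Monotone (mcdf μ) := fun _ _ hab =>
  ENNReal.toReal_mono (measure_ne_top μ _) (measure_mono (Iic_subset_Iic.2 hab))

end mcdf

lemma setLIntegral_Iio_ofReal_sub (μ : Measure ℝ) (v : ℝ) :
    ∫⁻ x in Iio v, ENNReal.ofReal (v - x) ∂μ = ∫⁻ y in Iio v, μ (Iic y) := by
  have hlevel : ∀ t ∈ Ioi (0 : ℝ), μ.restrict (Iio v) {x | t ≤ v - x} = μ (Iic (v - t)) := by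
    intro t ht
    have hsub : Iic (v - t) ⊆ Iio v := Iic_subset_Iio.2 (by linarith [mem_Ioi.1 ht])
    rw [show {x : ℝ | t ≤ v - x} = Iic (v - t) by ext; simp [le_sub_comm],
      Measure.restrict_apply measurableSet_Iic, inter_eq_left.2 hsub]
  have hpre : (fun t : ℝ => v - t) ⁻¹' Iio v = Ioi 0 := by ext; simp
  rw [lintegral_eq_lintegral_meas_le _
      ((ae_restrict_mem measurableSet_Iio).mono fun x hx => sub_nonneg.2 (le_of_lt hx))
      (by fun_prop : Measurable fun x : ℝ => v - x).aemeasurable,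
    setLIntegral_congr_fun measurableSet_Ioi hlevel, ← hpre]
  exact (Measure.measurePreserving_sub_left volume v).setLIntegral_comp_preimage_emb
    (MeasurableEquiv.subLeft v).measurableEmbedding (fun y => μ (Iic y)) (Iio v)

section layerCake

variable (μ : Measure ℝ) [IsFiniteMeasure μ]

lemma integrableOn_Iio_mcdf (hint : Integrable (fun x : ℝ => x) μ) (v : ℝ) :
    IntegrableOn (mcdf μ) (Iio v) := by
  refine ⟨(monotone_mcdf μ).measurable.aestronglyMeasurable,
    (hasFiniteIntegral_iff_ofReal (ae_of_all _ (mcdf_nonneg μ))).2 ?_⟩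
  simp_rw [ofReal_mcdf, ← setLIntegral_Iio_ofReal_sub]
  calc ∫⁻ x in Iio v, ENNReal.ofReal (v - x) ∂μ ≤ ∫⁻ x, ‖v - x‖ₑ ∂μ :=
        (lintegral_mono fun x => Real.ofReal_le_enorm _).trans (setLIntegral_le_lintegral _ _)
    _ < ⊤ := ((integrable_const v).sub hint).hasFiniteIntegral

lemma setIntegral_Iio_mcdf (v : ℝ) :
    ∫ y in Iio v, mcdf μ y = ∫ x in Iio v, (v - x) ∂μ := by
  rw [integral_eq_lintegral_of_nonneg_ae (ae_of_all _ (mcdf_nonneg μ))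
      (monotone_mcdf μ).measurable.aestronglyMeasurable,
    integral_eq_lintegral_of_nonneg_ae
      ((ae_restrict_mem measurableSet_Iio).mono fun x hx => sub_nonneg.2 (le_of_lt hx))
      (by fun_prop : Measurable fun x : ℝ => v - x).aestronglyMeasurable]
  simp_rw [ofReal_mcdf, setLIntegral_Iio_ofReal_sub]

end layerCake

/-- `p` times the Rockafellar–Uryasev objective `t - E[(t - X)⁺] / p`. -/
noncomputable def cvarObjective (p : ℝ) (μ : Measure ℝ) (t : ℝ) : ℝ :=
  p * t - ∫ y in Iio t, mcdf μ y

lemma mul_cvar_eq_cvarObjective {p : ℝ} (hp : p ≠ 0) (μ : Measure ℝ) [IsFiniteMeasure μ]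
    (hint : Integrable (fun x : ℝ => x) μ) :
    p * cvar p μ = cvarObjective p μ (valueAtRisk p μ) := by
  set v := valueAtRisk p μ
  have hlayer : ∫ y in Iio v, mcdf μ y = v * (μ (Iio v)).toReal - ∫ x in Iio v, x ∂μ := by
    rw [setIntegral_Iio_mcdf, integral_sub (integrable_const v) hint.integrableOn,
      integral_const, measureReal_restrict_apply_univ, measureReal_def, smul_eq_mul, mul_comm]
  rw [cvarObjective, hlayer, cvar]
  field_simp
  ring

section valueAtRisk

variable {p : ℝ} (μ : Measure ℝ) [IsProbabilityMeasure μ]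

lemma mcdf_le_of_lt_valueAtRisk (hp : 0 < p) {r : ℝ} (hr : r < valueAtRisk p μ) :
    mcdf μ r ≤ p := by
  have hne : {x : ℝ | mcdf μ x ≤ p}.Nonempty := by
    obtain ⟨x, hx⟩ := ((tendsto_cdf_atBot (μ := μ)).eventually (eventually_le_nhds hp)).exists
    exact ⟨x, by rw [mcdf_eq_cdf]; exact hx⟩
  obtain ⟨r', hr', hrr'⟩ := exists_lt_of_lt_csSup hne hr
  exact (monotone_mcdf μ hrr'.le).trans hr'

lemma le_mcdf_of_valueAtRisk_lt (hp : p < 1) {r : ℝ} (hr : valueAtRisk p μ < r) :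
    p ≤ mcdf μ r := by
  obtain ⟨r₀, hr₀⟩ := ((tendsto_cdf_atTop (μ := μ)).eventually (eventually_gt_nhds hp)).exists
  have hbdd : BddAbove {x : ℝ | mcdf μ x ≤ p} := by
    refine ⟨r₀, fun x (hx : mcdf μ x ≤ p) => le_of_not_gt fun hx₀ => ?_⟩
    exact hx.not_gt (lt_of_lt_of_le (by rwa [mcdf_eq_cdf]) (monotone_mcdf μ hx₀.le))
  by_contra! hlt
  exact absurd (le_csSup hbdd hlt.le) (not_le.2 hr)

end valueAtRisk

section cvarObjective

variable {p : ℝ} (μ : Measure ℝ)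

lemma cvarObjective_le_cvarObjective_valueAtRisk (hp : p ∈ Ioo 0 1) [IsProbabilityMeasure μ]
    (hint : Integrable (fun x : ℝ => x) μ) (t : ℝ) :
    cvarObjective p μ t ≤ cvarObjective p μ (valueAtRisk p μ) := by
  set s := valueAtRisk p μ
  have hdiff : cvarObjective p μ s - cvarObjective p μ t = p * (s - t) - ∫ y in t..s, mcdf μ y := by
    rw [cvarObjective, cvarObjective, ← intervalIntegral.integral_Iio_sub_Iio'
      (integrableOn_Iio_mcdf μ hint s) (integrableOn_Iio_mcdf μ hint t)]
    ring
  have hmcdf : ∀ a b, IntervalIntegrable (mcdf μ) volume a b :=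
    fun _ _ => (monotone_mcdf μ).intervalIntegrable
  rcases le_total t s with hts | hst
  · have hle : ∫ y in t..s, mcdf μ y ≤ ∫ _ in t..s, p :=
      intervalIntegral.integral_mono_on_of_le_Ioo hts (hmcdf t s) intervalIntegrable_const
        fun y hy => mcdf_le_of_lt_valueAtRisk μ hp.1 hy.2
    rw [intervalIntegral.integral_const, smul_eq_mul] at hle
    linarith
  · have hge : ∫ _ in s..t, p ≤ ∫ y in s..t, mcdf μ y :=
      intervalIntegral.integral_mono_on_of_le_Ioo hst intervalIntegrable_const (hmcdf s t)
        fun y hy => le_mcdf_of_valueAtRisk_lt μ hp.2 hy.1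
    rw [intervalIntegral.integral_const, smul_eq_mul] at hge
    rw [intervalIntegral.integral_symm] at hdiff
    linarith

lemma cvarObjective_le_of_mcdf_le (ν : Measure ℝ) [IsFiniteMeasure μ] [IsFiniteMeasure ν]
    (hintμ : Integrable (fun x : ℝ => x) μ) (hintν : Integrable (fun x : ℝ => x) ν) {t : ℝ}
    (hF : ∀ r < t, mcdf ν r ≤ mcdf μ r) :
    cvarObjective p μ t ≤ cvarObjective p ν t :=
  sub_le_sub_left (setIntegral_mono_on (integrableOn_Iio_mcdf ν hintν t)
    (integrableOn_Iio_mcdf μ hintμ t) measurableSet_Iio hF) _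

end cvarObjective

/-- If `F_{μ₁}(r) ≥ F_{μ₂}(r)` for all `r ≤ VaR_p(μ₁)`, then
`CVaR_p(μ₁) ≤ CVaR_p(μ₂)`. -/
theorem cvar_mono_of_cdf_ge_up_to_var
    (p : ℝ) (hp : p ∈ Set.Ioo (0 : ℝ) 1)
    (μ₁ μ₂ : Measure ℝ) [IsProbabilityMeasure μ₁] [IsProbabilityMeasure μ₂]
    (hint₁ : Integrable (fun x : ℝ => x) μ₁)
    (hint₂ : Integrable (fun x : ℝ => x) μ₂)
    (hF : ∀ r : ℝ, r ≤ valueAtRisk p μ₁ → mcdf μ₂ r ≤ mcdf μ₁ r) :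
    cvar p μ₁ ≤ cvar p μ₂ := by
  refine le_of_mul_le_mul_left ?_ hp.1
  calc p * cvar p μ₁ = cvarObjective p μ₁ (valueAtRisk p μ₁) :=
        mul_cvar_eq_cvarObjective hp.1.ne' μ₁ hint₁
    _ ≤ cvarObjective p μ₂ (valueAtRisk p μ₁) :=
        cvarObjective_le_of_mcdf_le μ₁ μ₂ hint₁ hint₂ fun r hr => hF r hr.le
    _ ≤ cvarObjective p μ₂ (valueAtRisk p μ₂) :=
        cvarObjective_le_cvarObjective_valueAtRisk μ₂ hp hint₂ _
    _ = p * cvar p μ₂ := (mul_cvar_eq_cvarObjective hp.1.ne' μ₂ hint₂).symm
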